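/- The linear map defined by f₁ = e₁, f₂ = −e₄, f₃ = −(x/2)e₁ + e₃, f₄ = e₂ is a linear isomorphism preserving brackets, and hence a Lie algebra isomorphism from B₂ (brackets [e₁,e₂] = −e₁, [e₂,e₃] = xe₁ − e₃ − e₄, [e₂,e₄] = −e₄) to r₄,₋₁ (brackets [f₄,f₁] = f₁, [f₄,f₂] = −f₂, [f₄,f₃] = f₂ − f₃). -/
import Mathlib


/-- The bracket of the Lie algebra `B₂` on `ℝ⁴` (0-indexed):
`[e₀,e₁] = −e₀`, `[e₁,e₂] = x e₀ − e₂ − e₃`, `[e₁,e₃] = −e₃`. -/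
def brB2 (x : ℝ) (u v : Fin 4 → ℝ) : Fin 4 → ℝ :=
  ![-(u 0 * v 1 - u 1 * v 0) + x * (u 1 * v 2 - u 2 * v 1), 0,
    -(u 1 * v 2 - u 2 * v 1),
    -(u 1 * v 2 - u 2 * v 1) - (u 1 * v 3 - u 3 * v 1)]

/-- The bracket of the Lie algebra `r₄,₋₁` on `ℝ⁴` (0-indexed basis `f₀,…,f₃`):
`[f₃,f₀] = f₀`, `[f₃,f₁] = −f₁`, `[f₃,f₂] = f₁ − f₂`. -/
def brR4m1 (u v : Fin 4 → ℝ) : Fin 4 → ℝ :=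
  ![u 3 * v 0 - u 0 * v 3,
    -(u 3 * v 1 - u 1 * v 3) + (u 3 * v 2 - u 2 * v 3),
    -(u 3 * v 2 - u 2 * v 3), 0]

/-- The linear map sending `f₁ ↦ e₁`, `f₂ ↦ −e₄`, `f₃ ↦ −(x/2)e₁ + e₃`, `f₄ ↦ e₂`
(0-indexed: `f₀ ↦ e₀`, `f₁ ↦ −e₃`, `f₂ ↦ −(x/2)e₀ + e₂`, `f₃ ↦ e₁`). -/
noncomputable def TB2 (x : ℝ) : (Fin 4 → ℝ) →ₗ[ℝ] (Fin 4 → ℝ) :=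
  Matrix.toLin' !![1, 0, -(x/2), 0; 0, 0, 0, 1; 0, 0, 1, 0; 0, -1, 0, 0]

theorem TB2_apply (x : ℝ) (u : Fin 4 → ℝ) :
    TB2 x u = ![u 0 - (x/2) * u 2, u 3, u 2, -u 1] := by
  unfold TB2
  rw [Matrix.toLin'_apply]
  funext i
  fin_cases i <;>
    simp [Matrix.mulVec, dotProduct, Fin.sum_univ_four] <;> ring

/-- `T` is a Lie algebra isomorphism from `r₄,₋₁` onto `B₂`. -/
theorem stmt13 (x : ℝ) :
    Function.Bijective (TB2 x) ∧
    ∀ u v, TB2 x (brR4m1 u v) = brB2 x (TB2 x u) (TB2 x v) := by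
  constructor
  · have h : Function.LeftInverse (fun u : Fin 4 → ℝ => ![u 0 + (x/2) * u 2, -u 3, u 2, u 1])
        (TB2 x) ∧ Function.RightInverse (fun u : Fin 4 → ℝ => ![u 0 + (x/2) * u 2, -u 3, u 2, u 1])
        (TB2 x) := by
      constructor <;> intro u <;> rw [TB2_apply] <;> funext i <;> fin_cases i <;>
        simp <;> ring
    exact ⟨h.1.injective, h.2.surjective⟩
  · intro u v
    rw [TB2_apply, TB2_apply, TB2_apply]
    funext i
    fin_cases i <;> simp [brB2, brR4m1] <;> ring
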